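/- arXiv:2104.00067 — 2 statements merged into one kernel-verified Lean document; each statement's English description precedes it below -/
import Mathlib

section
/- Let k, l ≥ 0 be integers with k + l ≡ 0 (mod N), and for j = 1,…,N−1 let integers k_j satisfy 0 ≤ k_j, and set l_j = (k+l)(1 − j/N) − k_j (assumed to be nonnegative integers), k_0 = k, l_0 = l, k_N = l_N = 0 and k̃_j = k_j − k(1 − j/N). Then −(1 − 1/N)·k·l + Σ_{j=0}^{N−2} ( l_j k_{j+1} + k_j l_{j+1} − 2 k_{j+1} l_{j+1} ) = k̃_1² + k̃_{N−1}² + Σ_{j=1}^{N−2} (k̃_{j+1} − k̃_j)². -/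
open Finset

private lemma sumA (g : ℕ → ℚ) (n : ℕ) :
    ∑ j ∈ range n, (2 * g (j+1)^2 - 2 * g j * g (j+1))
      = (∑ j ∈ range n, (g (j+1) - g j)^2) + g n ^ 2 - g 0 ^ 2 := by
  induction n with
  | zero => simp
  | succ n ih => rw [sum_range_succ, sum_range_succ, ih]; ring

private lemma sumB (g : ℕ → ℚ) (c : ℚ) (n : ℕ) :
    ∑ j ∈ range n, ((1 - c*((j:ℚ)+1)) * (g j - g (j+1)) + c * g (j+1))
      = (1 - c) * g 0 - (1 - c*((n:ℚ)+1)) * g n := by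
  induction n with
  | zero => simp
  | succ n ih => rw [sum_range_succ, ih]; push_cast; ring

private lemma sumC (c : ℚ) (n : ℕ) :
    ∑ j ∈ range n, (1 - c*((j:ℚ)+1)) = n - c * (n*(n+1))/2 := by
  induction n with
  | zero => simp
  | succ n ih => rw [sum_range_succ, ih]; push_cast; ring

/-- Quadratic-form identity governing the clustering of iso-scalar form factors
(eq. expsc): with `k_0 = k`, `k_N = 0`, `l_j = (k+l)(1 − j/N) − k_j` (nonnegative
integers), `k + l ≡ 0 (mod N)` and `k̃_j = k_j − k(1 − j/N)`, one has
`−(1 − 1/N) k l + Σ_{j=0}^{N−2} (l_j k_{j+1} + k_j l_{j+1} − 2 k_{j+1} l_{j+1})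
  = k̃_1² + k̃_{N−1}² + Σ_{j=1}^{N−2} (k̃_{j+1} − k̃_j)²`. -/
theorem isoscalar_exponent_identity (N : ℕ) (hN : 2 ≤ N) (k l : ℤ)
    (hk : 0 ≤ k) (hl : 0 ≤ l) (hmod : (N : ℤ) ∣ (k + l))
    (kf lf : ℕ → ℚ)
    (hk0 : kf 0 = (k : ℚ)) (hkN : kf N = 0) (hkpos : ∀ j, 0 ≤ kf j)
    (hlf : ∀ j ≤ N, lf j = ((k : ℚ) + (l : ℚ)) * (1 - (j : ℚ) / (N : ℚ)) - kf j)
    (hlint : ∀ j ≤ N, ∃ m : ℤ, lf j = (m : ℚ)) (hlpos : ∀ j ≤ N, 0 ≤ lf j) :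
    -(1 - 1 / (N : ℚ)) * (k : ℚ) * (l : ℚ) +
        ∑ j ∈ Finset.range (N - 1),
          (lf j * kf (j + 1) + kf j * lf (j + 1) - 2 * kf (j + 1) * lf (j + 1)) =
      (kf 1 - (k : ℚ) * (1 - 1 / (N : ℚ))) ^ 2 +
        (kf (N - 1) - (k : ℚ) * (1 - ((N : ℚ) - 1) / (N : ℚ))) ^ 2 +
        ∑ j ∈ Finset.range (N - 2),
          ((kf (j + 2) - (k : ℚ) * (1 - ((j : ℚ) + 2) / (N : ℚ))) -
            (kf (j + 1) - (k : ℚ) * (1 - ((j : ℚ) + 1) / (N : ℚ)))) ^ 2 := by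
  have hNQ : (N:ℚ) ≠ 0 := by
    have : (0:ℚ) < N := by exact_mod_cast (by omega : 0 < N)
    exact ne_of_gt this
  set c : ℚ := 1/(N:ℚ) with hc
  set g : ℕ → ℚ := fun j => kf j - (k:ℚ)*(1 - (j:ℚ)*c) with hg
  have hg0 : g 0 = 0 := by simp [hg, hk0]
  have hcast : ((N-1 : ℕ) : ℚ) = (N:ℚ) - 1 := by
    have h1 : 1 ≤ N := by omega
    push_cast [h1]; ring
  have hgN1 : g (N-1) = kf (N-1) - (k:ℚ)*(1 - ((N:ℚ)-1)*c) := by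
    simp [hg, hcast]
  -- rewrite each summand of the LHS
  have key : ∀ j ∈ range (N-1),
      lf j * kf (j+1) + kf j * lf (j+1) - 2 * kf (j+1) * lf (j+1)
        = 2*(k:ℚ)*(l:ℚ)*c*(1 - c*((j:ℚ)+1))
          + ((l:ℚ)-(k:ℚ)) * ((1 - c*((j:ℚ)+1)) * (g j - g (j+1)) + c * g (j+1))
          + (2 * g (j+1)^2 - 2 * g j * g (j+1)) := by
    intro j hj
    rw [mem_range] at hj
    rw [hlf j (by omega), hlf (j+1) (by omega)]
    simp only [hg, hc]
    push_cast
    field_simp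
    ring
  rw [Finset.sum_congr rfl key]
  rw [sum_add_distrib, sum_add_distrib, ← mul_sum, ← mul_sum,
    sumC c (N-1), sumB g c (N-1), sumA g (N-1)]
  -- split the square-difference sum
  have hN2 : N - 1 = (N-2) + 1 := by omega
  have hsplit : (∑ j ∈ range (N-1), (g (j+1) - g j)^2)
      = (∑ j ∈ range (N-2), (g (j+2) - g (j+1))^2) + (g 1 - g 0)^2 := by
    rw [hN2, Finset.sum_range_succ']
  rw [hsplit]
  -- identify the RHS sum
  have hRHS : ∑ j ∈ Finset.range (N - 2),
      ((kf (j + 2) - (k : ℚ) * (1 - ((j : ℚ) + 2) / (N : ℚ))) -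
        (kf (j + 1) - (k : ℚ) * (1 - ((j : ℚ) + 1) / (N : ℚ)))) ^ 2
      = ∑ j ∈ range (N-2), (g (j+2) - g (j+1))^2 := by
    refine Finset.sum_congr rfl fun j _ => ?_
    simp only [hg, hc]
    push_cast
    ring
  rw [hRHS, hcast, hgN1, hg0]
  have h1 : g 1 = kf 1 - (k:ℚ)*(1 - 1*c) := by simp [hg]
  rw [h1]
  simp only [hc]
  field_simp
  ring
end

section
/- With the same notation as the iso-scalar case but l_j = (k+l)(1 − j/N) − k_j − 1 (adjoint representation), one has −(1 − 1/N)·k·l + Σ_{j=0}^{N−2} ( l_j k_{j+1} + k_j l_{j+1} − 2 k_{j+1} l_{j+1} ) = k̃_1² + k̃_{N−1}² + Σ_{j=1}^{N−2} (k̃_{j+1} − k̃_j)² + k̃_1 + k̃_{N−1}, where k̃_j = k_j − k(1 − j/N), k_0 = k, l_0 = l, k_N = l_N = 0. -/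
private lemma abel_sum (x y : ℕ → ℚ) (n : ℕ) :
    ∑ j ∈ Finset.range n,
        (y j * x (j + 1) + x j * y (j + 1) - 2 * x (j + 1) * y (j + 1)) =
      -∑ j ∈ Finset.range n, (x (j + 1) - x j) * (y (j + 1) - y j)
        + x 0 * y 0 - x n * y n := by
  induction n with
  | zero => simp
  | succ m ih =>
      rw [Finset.sum_range_succ, Finset.sum_range_succ, ih]; ring

/-- Quadratic-form identity for the adjoint representation (eq. expad):
with `k_0 = k`, `k_N = 0`, `l_0 = l`, `l_N = 0`,
`l_j = (k+l)(1 − j/N) − k_j − 1` for `1 ≤ j ≤ N−1`, and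
`k̃_j = k_j − k(1 − j/N)`:
`−(1 − 1/N) k l + Σ_{j=0}^{N−2} (l_j k_{j+1} + k_j l_{j+1} − 2 k_{j+1} l_{j+1})
  = k̃_1² + k̃_{N−1}² + Σ_{j=1}^{N−2} (k̃_{j+1} − k̃_j)² + k̃_1 + k̃_{N−1}`. -/
theorem adjoint_exponent_identity (N : ℕ) (hN : 2 ≤ N) (k l : ℤ)
    (hk : 0 ≤ k) (hl : 0 ≤ l) (hmod : (N : ℤ) ∣ (k + l))
    (kf lf : ℕ → ℚ)
    (hk0 : kf 0 = (k : ℚ)) (hkN : kf N = 0) (hkpos : ∀ j, 0 ≤ kf j)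
    (hl0 : lf 0 = (l : ℚ)) (hlN : lf N = 0)
    (hlf : ∀ j, 1 ≤ j → j ≤ N - 1 →
      lf j = ((k : ℚ) + (l : ℚ)) * (1 - (j : ℚ) / (N : ℚ)) - kf j - 1)
    (hlint : ∀ j ≤ N, ∃ m : ℤ, lf j = (m : ℚ)) (hlpos : ∀ j ≤ N, 0 ≤ lf j) :
    -(1 - 1 / (N : ℚ)) * (k : ℚ) * (l : ℚ) +
        ∑ j ∈ Finset.range (N - 1),
          (lf j * kf (j + 1) + kf j * lf (j + 1) - 2 * kf (j + 1) * lf (j + 1)) =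
      (kf 1 - (k : ℚ) * (1 - 1 / (N : ℚ))) ^ 2 +
        (kf (N - 1) - (k : ℚ) * (1 - ((N : ℚ) - 1) / (N : ℚ))) ^ 2 +
        ∑ j ∈ Finset.range (N - 2),
          ((kf (j + 2) - (k : ℚ) * (1 - ((j : ℚ) + 2) / (N : ℚ))) -
            (kf (j + 1) - (k : ℚ) * (1 - ((j : ℚ) + 1) / (N : ℚ)))) ^ 2 +
        (kf 1 - (k : ℚ) * (1 - 1 / (N : ℚ))) +
        (kf (N - 1) - (k : ℚ) * (1 - ((N : ℚ) - 1) / (N : ℚ))) := by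
  obtain ⟨M, rfl⟩ : ∃ M, N = M + 2 := ⟨N - 2, by omega⟩
  have e1 : M + 2 - 1 = M + 1 := rfl
  have e2 : M + 2 - 2 = M := rfl
  rw [e1, e2] at *
  have hNq : ((M : ℚ) + 2) ≠ 0 := by positivity
  have hNcast : ((M + 2 : ℕ) : ℚ) = (M : ℚ) + 2 := by push_cast; ring
  -- values of lf at 1 and M+1
  have hlf1 : lf 1 = ((k : ℚ) + l) * (1 - 1 / ((M : ℚ) + 2)) - kf 1 - 1 := by
    have := hlf 1 le_rfl (by omega)
    rwa [hNcast, Nat.cast_one] at this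
  have hlfM1 : lf (M + 1) =
      ((k : ℚ) + l) * (1 - ((M : ℚ) + 1) / ((M : ℚ) + 2)) - kf (M + 1) - 1 := by
    have := hlf (M + 1) (by omega) le_rfl
    rw [hNcast] at this; push_cast at this ⊢; linarith
  -- telescoped sum of differences
  have htel : ∑ j ∈ Finset.range M, (kf (j + 2) - kf (j + 1)) = kf (M + 1) - kf 1 := by
    exact Finset.sum_range_sub (fun i => kf (i + 1)) M
  -- interior sum of Δkf * Δlf
  have hA : ∑ j ∈ Finset.range M,
      ((kf (j + 1 + 1) - kf (j + 1)) * (lf (j + 1 + 1) - lf (j + 1))) =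
      -(((k : ℚ) + l) / ((M : ℚ) + 2)) * (kf (M + 1) - kf 1)
        - ∑ j ∈ Finset.range M, (kf (j + 2) - kf (j + 1)) ^ 2 := by
    have step : ∀ j ∈ Finset.range M,
        (kf (j + 1 + 1) - kf (j + 1)) * (lf (j + 1 + 1) - lf (j + 1)) =
        -(((k : ℚ) + l) / ((M : ℚ) + 2)) * (kf (j + 2) - kf (j + 1))
          - (kf (j + 2) - kf (j + 1)) ^ 2 := by
      intro j hj
      rw [Finset.mem_range] at hj
      have h1 := hlf (j + 1) (by omega) (by omega)
      have h2 := hlf (j + 2) (by omega) (by omega)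
      rw [hNcast] at h1 h2
      push_cast at h1 h2
      have hj2 : j + 1 + 1 = j + 2 := rfl
      rw [hj2, h1, h2]
      field_simp
      ring
    rw [Finset.sum_congr rfl step, Finset.sum_sub_distrib, ← Finset.mul_sum, htel]
  -- RHS quadratic sum
  have hB : ∑ j ∈ Finset.range M,
      ((kf (j + 2) - (k : ℚ) * (1 - ((j : ℚ) + 2) / ((M : ℚ) + 2))) -
        (kf (j + 1) - (k : ℚ) * (1 - ((j : ℚ) + 1) / ((M : ℚ) + 2)))) ^ 2 =
      ∑ j ∈ Finset.range M, (kf (j + 2) - kf (j + 1)) ^ 2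
        + 2 * ((k : ℚ) / ((M : ℚ) + 2)) * (kf (M + 1) - kf 1)
        + (M : ℚ) * ((k : ℚ) / ((M : ℚ) + 2)) ^ 2 := by
    have step : ∀ j ∈ Finset.range M,
        ((kf (j + 2) - (k : ℚ) * (1 - ((j : ℚ) + 2) / ((M : ℚ) + 2))) -
          (kf (j + 1) - (k : ℚ) * (1 - ((j : ℚ) + 1) / ((M : ℚ) + 2)))) ^ 2 =
        (kf (j + 2) - kf (j + 1)) ^ 2
          + 2 * ((k : ℚ) / ((M : ℚ) + 2)) * (kf (j + 2) - kf (j + 1))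
          + ((k : ℚ) / ((M : ℚ) + 2)) ^ 2 := by
      intro j _
      field_simp
      ring
    rw [Finset.sum_congr rfl step, Finset.sum_add_distrib, Finset.sum_add_distrib,
      Finset.sum_const, ← Finset.mul_sum, htel]
    simp [nsmul_eq_mul]
  -- Abel summation on the LHS
  rw [abel_sum kf lf (M + 1), Finset.sum_range_succ' (fun j => (kf (j + 1) - kf j) * (lf (j + 1) - lf j)) M]
  rw [hA, hk0, hl0, hlf1, hlfM1]
  push_cast
  rw [hB]
  field_simp
  ring
end
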